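/- arXiv:2003.06723 — 2 statements merged into one kernel-verified Lean document; each statement's English description precedes it below -/
import Mathlib

section
/- Let n > p ≥ 1, let Z be a real n × p matrix such that ZᵀZ is positive definite, let D ∈ ℝⁿ, γ̂ = (ZᵀZ)⁻¹ZᵀD, and suppose the residual sum of squares RSS = ‖D − Zγ̂‖₂² is strictly positive. Let C₀ > 0, define the F-statistic F = (‖Zγ̂‖₂²/p) / (RSS/(n−p)), the penalty λ = √(C₀ · (p/(n−p)) · RSS), and S = (ZᵀZ)^{−1/2} ZᵀD, where (ZᵀZ)^{1/2} is the positive-definite square root of ZᵀZ. Then F > C₀ if and only if ‖S‖₂ > λ; equivalently, F > C₀ if and only if the unique global minimizer v̂ of v ↦ (1/2)‖v − S‖₂² + λ‖v‖₂ over ℝ^p is nonzero. -/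
/-!
Both halves rest on the identity `‖Z γ̂‖² = ‖S‖² = (ZᵀD)ᵀ (ZᵀZ)⁻¹ (ZᵀD)`, which holds because the
square root `M` of `ZᵀZ` is symmetric, so `‖M⁻¹ w‖² = wᵀ (M M)⁻¹ w`. With it, `F > C₀` is a
rearrangement of `λ² < ‖S‖²`. For the group lasso, `v = 0` beats every `v ≠ 0` when `‖S‖ ≤ λ`
(Cauchy–Schwarz), while for `λ < ‖S‖` the soft-thresholded point `(1 - λ / ‖S‖) S` beats `0`.
-/

open Matrix

section SquareRoot

variable {n : Type*} [Fintype n] [DecidableEq n]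

open scoped ComplexOrder in
lemma Matrix.PosSemidef.cfc_sqrt_mul_self {𝕜 : Type*} [RCLike 𝕜] {A : Matrix n n 𝕜}
    (hA : A.PosSemidef) : cfc Real.sqrt A * cfc Real.sqrt A = A := by
  rw [← cfc_mul Real.sqrt Real.sqrt A]
  conv_rhs => rw [← cfc_id' ℝ A hA.isHermitian]
  refine cfc_congr fun x hx => ?_
  obtain ⟨i, rfl⟩ := hA.isHermitian.spectrum_real_eq_range_eigenvalues ▸ hx
  exact Real.mul_self_sqrt (hA.eigenvalues_nonneg i)

lemma Matrix.IsHermitian.eigenvectorUnitary_mul_diagonal_sqrt_mul_star {A : Matrix n n ℝ}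
    (hA : A.IsHermitian) :
    (hA.eigenvectorUnitary : Matrix n n ℝ) * diagonal ((↑) ∘ (Real.sqrt ∘ hA.eigenvalues)) *
      (star hA.eigenvectorUnitary : Matrix n n ℝ) = cfc Real.sqrt A := by
  rw [hA.cfc_eq, IsHermitian.cfc, Unitary.conjStarAlgAut_apply]
  rfl

lemma Matrix.transpose_cfc (f : ℝ → ℝ) (A : Matrix n n ℝ) : (cfc f A)ᵀ = cfc f A := by
  have h : (cfc f A)ᴴ = cfc f A := cfc_predicate f A
  simpa using h

end SquareRoot

section QuadraticForms

variable {m n R : Type*} [Fintype m] [Fintype n]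

lemma Matrix.sum_sq_eq_dotProduct_self [CommSemiring R] (x : n → R) : ∑ i, x i ^ 2 = x ⬝ᵥ x := by
  simp only [dotProduct, sq]

lemma Matrix.mulVec_dotProduct_mulVec_self [CommSemiring R] (B : Matrix m n R) (x : n → R) :
    (B *ᵥ x) ⬝ᵥ (B *ᵥ x) = x ⬝ᵥ ((Bᵀ * B) *ᵥ x) := by
  rw [dotProduct_mulVec, ← mulVec_transpose, mulVec_mulVec, dotProduct_comm]

variable [DecidableEq n] [CommRing R]

lemma Matrix.inv_mulVec_dotProduct_inv_mulVec_of_transpose_eq {M : Matrix n n R} (hM : Mᵀ = M)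
    (w : n → R) : (M⁻¹ *ᵥ w) ⬝ᵥ (M⁻¹ *ᵥ w) = w ⬝ᵥ ((M * M)⁻¹ *ᵥ w) := by
  rw [mulVec_dotProduct_mulVec_self, transpose_nonsing_inv, hM, Matrix.mul_inv_rev]

lemma Matrix.leastSquares_fit_dotProduct_self (Z : Matrix m n R) (hZ : IsUnit (Zᵀ * Z).det)
    (D : m → R) :
    (Z *ᵥ ((Zᵀ * Z)⁻¹ *ᵥ (Zᵀ *ᵥ D))) ⬝ᵥ (Z *ᵥ ((Zᵀ * Z)⁻¹ *ᵥ (Zᵀ *ᵥ D))) =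
      (Zᵀ *ᵥ D) ⬝ᵥ ((Zᵀ * Z)⁻¹ *ᵥ (Zᵀ *ᵥ D)) := by
  rw [mulVec_dotProduct_mulVec_self, mulVec_mulVec _ (Zᵀ * Z), mul_nonsing_inv _ hZ, one_mulVec,
    dotProduct_comm]

end QuadraticForms

lemma lt_div_div_iff_sqrt_lt_sqrt {C Q q m R : ℝ} (hC : 0 ≤ C) (hq : 0 < q) (hm : 0 < m)
    (hR : 0 < R) : C < Q / q / (R / m) ↔ √(C * (q / m) * R) < √Q := by
  rw [Real.sqrt_lt_sqrt_iff (by positivity), lt_div_iff₀ (by positivity), lt_div_iff₀ hq]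
  ring_nf

section GroupLasso

variable {E : Type*} [NormedAddCommGroup E]

noncomputable def groupLassoObjective (lam : ℝ) (s v : E) : ℝ := 1 / 2 * ‖v - s‖ ^ 2 + lam * ‖v‖

lemma groupLassoObjective_zero (lam : ℝ) (s : E) :
    groupLassoObjective lam s 0 = 1 / 2 * ‖s‖ ^ 2 := by
  simp [groupLassoObjective]

variable [InnerProductSpace ℝ E]

lemma groupLassoObjective_zero_lt {lam : ℝ} {s v : E} (h : ‖s‖ ≤ lam) (hv : v ≠ 0) :
    groupLassoObjective lam s 0 < groupLassoObjective lam s v := by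
  have hv_pos : 0 < ‖v‖ := norm_pos_iff.mpr hv
  have hcs := real_inner_le_norm v s
  rw [groupLassoObjective_zero, groupLassoObjective, norm_sub_sq_real]
  nlinarith [mul_le_mul_of_nonneg_left h hv_pos.le]

lemma groupLassoObjective_shrink_lt_zero {lam : ℝ} {s : E} (hlam : 0 ≤ lam) (h : lam < ‖s‖) :
    groupLassoObjective lam s ((1 - lam / ‖s‖) • s) < groupLassoObjective lam s 0 := by
  have hs : 0 < ‖s‖ := hlam.trans_lt h
  have hshrink : 0 ≤ 1 - lam / ‖s‖ := by rw [sub_nonneg, div_le_one hs]; exact h.le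
  have hdist : ‖(1 - lam / ‖s‖) • s - s‖ = lam := by
    rw [sub_smul, one_smul, sub_sub_cancel_left, norm_neg, norm_smul, Real.norm_eq_abs,
      abs_of_nonneg (div_nonneg hlam hs.le), div_mul_cancel₀ _ hs.ne']
  have hnorm : ‖(1 - lam / ‖s‖) • s‖ = ‖s‖ - lam := by
    rw [norm_smul, Real.norm_eq_abs, abs_of_nonneg hshrink, sub_mul, one_mul,
      div_mul_cancel₀ _ hs.ne']
  rw [groupLassoObjective_zero, groupLassoObjective, hdist, hnorm]
  nlinarith [sq_pos_of_pos (sub_pos.mpr h)]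

theorem groupLasso_minimizer_ne_zero_iff {lam : ℝ} {s vhat : E} (hlam : 0 ≤ lam)
    (hmin : ∀ v, groupLassoObjective lam s vhat ≤ groupLassoObjective lam s v) :
    vhat ≠ 0 ↔ lam < ‖s‖ := by
  constructor
  · intro hv
    by_contra! h
    exact (hmin 0).not_gt (groupLassoObjective_zero_lt h hv)
  · rintro h rfl
    exact (hmin _).not_gt (groupLassoObjective_shrink_lt_zero hlam h)

end GroupLasso

section EuclideanCoordinates

variable {ι : Type*} [Fintype ι]

lemma EuclideanSpace.norm_toLp_eq_sqrt_sum_sq (v : ι → ℝ) :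
    ‖WithLp.toLp 2 v‖ = √(∑ i, v i ^ 2) := by
  simp [EuclideanSpace.norm_eq]

lemma groupLassoObjective_toLp (lam : ℝ) (s v : ι → ℝ) :
    groupLassoObjective lam (WithLp.toLp 2 s) (WithLp.toLp 2 v) =
      1 / 2 * ∑ i, (v i - s i) ^ 2 + lam * √(∑ i, v i ^ 2) := by
  rw [groupLassoObjective, ← WithLp.toLp_sub, EuclideanSpace.real_norm_sq_eq,
    EuclideanSpace.norm_toLp_eq_sqrt_sum_sq]
  rfl

end EuclideanCoordinates

theorem Ftest_iff_grouplasso_nonzero_general (n p : ℕ) (hp : 1 ≤ p) (hnp : p < n)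
    (Z : Matrix (Fin n) (Fin p) ℝ) (hZ : (Zᵀ * Z).PosDef)
    (D : Fin n → ℝ)
    (γhat : Fin p → ℝ) (hγ : γhat = (Zᵀ * Z)⁻¹ *ᵥ (Zᵀ *ᵥ D))
    (RSS : ℝ) (hRSSpos : 0 < RSS)
    (C0 : ℝ) (hC0 : 0 < C0)
    (F : ℝ) (hF : F = ((∑ i, ((Z *ᵥ γhat) i) ^ 2) / (p : ℝ)) / (RSS / ((n : ℝ) - (p : ℝ))))
    (lam : ℝ) (hlamdef : lam = Real.sqrt (C0 * ((p : ℝ) / ((n : ℝ) - (p : ℝ))) * RSS))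
    (S : Fin p → ℝ) (hS : S = ((hZ.isHermitian.eigenvectorUnitary : Matrix (Fin p) (Fin p) ℝ) *
      diagonal ((↑) ∘ (Real.sqrt ∘ hZ.isHermitian.eigenvalues)) *
      (star hZ.isHermitian.eigenvectorUnitary : Matrix (Fin p) (Fin p) ℝ))⁻¹ *ᵥ (Zᵀ *ᵥ D)) :
    (C0 < F ↔ lam < Real.sqrt (∑ j, S j ^ 2)) ∧
    (∀ vhat : Fin p → ℝ,
      (∀ v : Fin p → ℝ,
        (1 / 2) * (∑ j, (vhat j - S j) ^ 2) + lam * Real.sqrt (∑ j, vhat j ^ 2) ≤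
        (1 / 2) * (∑ j, (v j - S j) ^ 2) + lam * Real.sqrt (∑ j, v j ^ 2)) →
      (C0 < F ↔ vhat ≠ 0)) := by
  rw [hZ.isHermitian.eigenvectorUnitary_mul_diagonal_sqrt_mul_star] at hS
  have hfit : ∑ i, (Z *ᵥ γhat) i ^ 2 = ∑ j, S j ^ 2 := by
    rw [sum_sq_eq_dotProduct_self, sum_sq_eq_dotProduct_self, hS,
      inv_mulVec_dotProduct_inv_mulVec_of_transpose_eq (transpose_cfc _ _),
      hZ.posSemidef.cfc_sqrt_mul_self, hγ,
      leastSquares_fit_dotProduct_self Z hZ.det_pos.ne'.isUnit]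
  have hp_pos : (0 : ℝ) < p := by exact_mod_cast hp
  have hdf_pos : (0 : ℝ) < n - p := sub_pos.mpr (by exact_mod_cast hnp)
  have hF_iff : C0 < F ↔ lam < √(∑ j, S j ^ 2) := by
    rw [hF, hlamdef, hfit]
    exact lt_div_div_iff_sqrt_lt_sqrt hC0.le hp_pos hdf_pos hRSSpos
  refine ⟨hF_iff, fun vhat hmin => ?_⟩
  rw [hF_iff, ← EuclideanSpace.norm_toLp_eq_sqrt_sum_sq, ← (WithLp.toLp_injective 2).ne_iff,
    WithLp.toLp_zero, groupLasso_minimizer_ne_zero_iff (hlamdef ▸ Real.sqrt_nonneg _)]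
  intro v
  rw [← WithLp.toLp_ofLp (p := 2) v, groupLassoObjective_toLp, groupLassoObjective_toLp]
  exact hmin v.ofLp

/-- the F-test exceeding threshold `C₀` is equivalent to `‖S‖₂ > λ`,
equivalently to the group-lasso minimizer being nonzero. -/
theorem Ftest_iff_grouplasso_nonzero (n p : ℕ) (hp : 1 ≤ p) (hnp : p < n)
    (Z : Matrix (Fin n) (Fin p) ℝ) (hZ : (Zᵀ * Z).PosDef)
    (D : Fin n → ℝ)
    (γhat : Fin p → ℝ) (hγ : γhat = (Zᵀ * Z)⁻¹ *ᵥ (Zᵀ *ᵥ D))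
    (RSS : ℝ) (hRSS : RSS = ∑ i, (D i - (Z *ᵥ γhat) i) ^ 2) (hRSSpos : 0 < RSS)
    (C0 : ℝ) (hC0 : 0 < C0)
    (F : ℝ) (hF : F = ((∑ i, ((Z *ᵥ γhat) i) ^ 2) / (p : ℝ)) / (RSS / ((n : ℝ) - (p : ℝ))))
    (lam : ℝ) (hlamdef : lam = Real.sqrt (C0 * ((p : ℝ) / ((n : ℝ) - (p : ℝ))) * RSS))
    (S : Fin p → ℝ) (hS : S = ((hZ.isHermitian.eigenvectorUnitary : Matrix (Fin p) (Fin p) ℝ) *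
      diagonal ((↑) ∘ (Real.sqrt ∘ hZ.isHermitian.eigenvalues)) *
      (star hZ.isHermitian.eigenvectorUnitary : Matrix (Fin p) (Fin p) ℝ))⁻¹ *ᵥ (Zᵀ *ᵥ D)) :
    (C0 < F ↔ lam < Real.sqrt (∑ j, S j ^ 2)) ∧
    (∀ vhat : Fin p → ℝ,
      (∀ v : Fin p → ℝ,
        (1 / 2) * (∑ j, (vhat j - S j) ^ 2) + lam * Real.sqrt (∑ j, vhat j ^ 2) ≤
        (1 / 2) * (∑ j, (v j - S j) ^ 2) + lam * Real.sqrt (∑ j, v j ^ 2)) →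
      (C0 < F ↔ vhat ≠ 0)) :=
  Ftest_iff_grouplasso_nonzero_general n p hp hnp Z hZ D γhat hγ RSS hRSSpos C0 hC0 F hF lam hlamdef
    S hS
end

section
/- Let p ≥ 1 and λ > 0, and define φ : ℝ^p \ {0} → ℝ^p by φ(v) = v + λ·v/‖v‖₂. Then φ is Fréchet differentiable at every v ≠ 0, its derivative is the linear map Dφ(v) = Id + (λ/‖v‖₂)(Id − u uᵀ) where u = v/‖v‖₂, and the determinant of Dφ(v) equals ((‖v‖₂ + λ)/‖v‖₂)^{p−1}. -/
/-!
Writing `φ = id + λ • N` with `N x = ‖x‖⁻¹ • x`, the chain rule and `∇‖·‖ (v) = u` give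
`DN(v) = ‖v‖⁻¹ (Id − u uᵀ)`. In an orthonormal basis starting with `u`, `Dφ(v)` is diagonal with
entries `1` (along `u`) and `1 + λ/‖v‖` (on `u^⊥`), which gives the determinant.
-/

open scoped RealInnerProductSpace

open Module

theorem LinearMap.det_eq_prod_of_apply_basis_eq_smul {R M ι : Type*} [CommRing R]
    [AddCommGroup M] [Module R M] [Fintype ι] [DecidableEq ι] (b : Basis ι R M)
    (f : M →ₗ[R] M) (d : ι → R) (hf : ∀ i, f (b i) = d i • b i) :
    LinearMap.det f = ∏ i, d i := by
  have hM : LinearMap.toMatrix b b f = Matrix.diagonal d := by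
    ext i j
    rw [LinearMap.toMatrix_apply, hf, map_smul, b.repr_self, Matrix.diagonal_apply]
    by_cases hij : i = j <;> simp [hij]
  rw [← LinearMap.det_toMatrix b, hM, Matrix.det_diagonal]

section InnerProductSpace

variable {E : Type*} [NormedAddCommGroup E] [InnerProductSpace ℝ E]

theorem hasFDerivAt_norm {v : E} (hv : v ≠ 0) :
    HasFDerivAt (‖·‖) (innerSL ℝ (‖v‖⁻¹ • v)) v := by
  have hv' : ‖v‖ ^ 2 ≠ 0 := by positivity
  convert! (hasStrictFDerivAt_norm_sq v).hasFDerivAt.sqrt hv' using 1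
  · simp [Real.sqrt_sq (norm_nonneg _)]
  · ext x
    simp only [smul_apply, innerSL_apply_apply, real_inner_smul_left,
      Real.sqrt_sq (norm_nonneg _), smul_eq_mul]
    ring

theorem hasFDerivAt_inv_norm_smul {v : E} (hv : v ≠ 0) :
    HasFDerivAt (fun x => ‖x‖⁻¹ • x)
      (‖v‖⁻¹ • (ContinuousLinearMap.id ℝ E -
        (innerSL ℝ (‖v‖⁻¹ • v)).smulRight (‖v‖⁻¹ • v))) v := by
  have hv' : ‖v‖ ≠ 0 := norm_ne_zero_iff.mpr hv
  have hinv := (hasDerivAt_inv hv').comp_hasFDerivAt v (hasFDerivAt_norm hv)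
  refine (hinv.smul (hasFDerivAt_id v)).congr_fderiv ?_
  ext x
  simp only [add_apply, smul_apply, sub_apply, ContinuousLinearMap.smulRight_apply,
    ContinuousLinearMap.id_apply, Function.comp_apply, id_eq, innerSL_apply_apply,
    real_inner_smul_left]
  module

variable [FiniteDimensional ℝ E]

theorem det_id_add_smul_id_sub_rankOne {u : E} (hu : ‖u‖ = 1) (c : ℝ) :
    LinearMap.det ((ContinuousLinearMap.id ℝ E +
      c • (ContinuousLinearMap.id ℝ E - (innerSL ℝ u).smulRight u) : E →L[ℝ] E) : E →ₗ[ℝ] E) =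
      (1 + c) ^ (finrank ℝ E - 1) := by
  have : Nontrivial E := ⟨⟨u, 0, by simp [← norm_ne_zero_iff, hu]⟩⟩
  obtain ⟨n, hn⟩ : ∃ n, finrank ℝ E = n + 1 := Nat.exists_eq_add_one.mpr finrank_pos
  have hu' : Orthonormal ℝ (Set.domRestrict {0} (fun _ : Fin (n + 1) => u)) :=
    ⟨fun _ => hu, fun i j hij => (hij (Subtype.ext (i.2.trans j.2.symm))).elim⟩
  obtain ⟨b, hb⟩ := hu'.exists_orthonormalBasis_extension_of_card_eq (by simpa using hn)
  have hb0 : b 0 = u := hb 0 rfl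
  rw [hn, Nat.add_sub_cancel, LinearMap.det_eq_prod_of_apply_basis_eq_smul b.toBasis _
    (Fin.cons 1 fun _ => 1 + c), Fin.prod_univ_succ]
  · simp
  intro i
  refine Fin.cases ?_ (fun j => ?_) i
  · simp [hb0, hu]
  · have : ⟪u, b j.succ⟫ = 0 := hb0 ▸ b.orthonormal.2 (Fin.succ_ne_zero j).symm
    simp [this, add_smul]

end InnerProductSpace

theorem jacobian_of_kkt_map_general (p : ℕ) (lam : ℝ)
    (φ : EuclideanSpace ℝ (Fin p) → EuclideanSpace ℝ (Fin p))
    (hφ : ∀ v, v ≠ 0 → φ v = v + (lam / ‖v‖) • v)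
    (v : EuclideanSpace ℝ (Fin p)) (hv : v ≠ 0)
    (u : EuclideanSpace ℝ (Fin p)) (hu : u = ‖v‖⁻¹ • v)
    (Dφ : EuclideanSpace ℝ (Fin p) →L[ℝ] EuclideanSpace ℝ (Fin p))
    (hDφ : Dφ = ContinuousLinearMap.id ℝ (EuclideanSpace ℝ (Fin p)) +
      (lam / ‖v‖) • (ContinuousLinearMap.id ℝ (EuclideanSpace ℝ (Fin p)) -
        (innerSL ℝ u).smulRight u)) :
    HasFDerivAt φ Dφ v ∧
    LinearMap.det (Dφ : EuclideanSpace ℝ (Fin p) →ₗ[ℝ] EuclideanSpace ℝ (Fin p)) =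
      ((‖v‖ + lam) / ‖v‖) ^ (p - 1) := by
  subst hu hDφ
  constructor
  · have hφ_near : (fun x => x + lam • (‖x‖⁻¹ • x)) =ᶠ[nhds v] φ := by
      filter_upwards [isOpen_compl_singleton.mem_nhds hv] with x hx
      rw [hφ x hx, smul_smul, div_eq_mul_inv]
    have hN := (hasFDerivAt_inv_norm_smul hv).const_smul lam
    refine (((hasFDerivAt_id v).add hN).congr_of_eventuallyEq hφ_near.symm).congr_fderiv ?_
    rw [smul_smul, div_eq_mul_inv]
  · have hu : ‖‖v‖⁻¹ • v‖ = 1 := by simpa using norm_smul_inv_norm (𝕜 := ℝ) hv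
    rw [det_id_add_smul_id_sub_rankOne hu, finrank_euclideanSpace_fin, add_div,
      div_self (norm_ne_zero_iff.mpr hv)]

/-- the map `φ(v) = v + λ v / ‖v‖` is differentiable away from zero with
derivative `Id + (λ/‖v‖)(Id − u uᵀ)` whose determinant is `((‖v‖+λ)/‖v‖)^{p−1}`. -/
theorem jacobian_of_kkt_map (p : ℕ) (hp : 1 ≤ p) (lam : ℝ) (hlam : 0 < lam)
    (φ : EuclideanSpace ℝ (Fin p) → EuclideanSpace ℝ (Fin p))
    (hφ : ∀ v, v ≠ 0 → φ v = v + (lam / ‖v‖) • v)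
    (v : EuclideanSpace ℝ (Fin p)) (hv : v ≠ 0)
    (u : EuclideanSpace ℝ (Fin p)) (hu : u = ‖v‖⁻¹ • v)
    (Dφ : EuclideanSpace ℝ (Fin p) →L[ℝ] EuclideanSpace ℝ (Fin p))
    (hDφ : Dφ = ContinuousLinearMap.id ℝ (EuclideanSpace ℝ (Fin p)) +
      (lam / ‖v‖) • (ContinuousLinearMap.id ℝ (EuclideanSpace ℝ (Fin p)) -
        (innerSL ℝ u).smulRight u)) :
    HasFDerivAt φ Dφ v ∧
    LinearMap.det (Dφ : EuclideanSpace ℝ (Fin p) →ₗ[ℝ] EuclideanSpace ℝ (Fin p)) =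
      ((‖v‖ + lam) / ‖v‖) ^ (p - 1) :=
  jacobian_of_kkt_map_general p lam φ hφ v hv u hu Dφ hDφ
end
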